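/- Let k be a field, n a positive natural number, and R = k[[X_0,…,X_{n−1}]] the ring of formal power series in n variables over k. Let m be an index, and let a, b : Fin n → ℕ satisfy b ≤ a componentwise and a_m = b_m = 0. Set u = X^a and v = X^b·X_m. Then for every prime ideal P of R, the extension of the ideal (u, v) to the localization R_P fails to be principal if and only if X_m ∈ P and there exists an index i with b_i < a_i and X_i ∈ P. -/

import Mathlib

/-!
Since `b ≤ a`, the ideal is `X^b · (X^(a-b), X_m)`, and the nonzero factor `X^b` cancels in the
local domain `R_P`. In a local ring `(x, y)` is principal iff `x ∣ y` or `y ∣ x`. If `X_m ∉ P` or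
`X^(a-b) ∉ P`, one generator is a unit in `R_P`. Otherwise neither divides the other: a relation
`X^(a-b) ∣ X_m · s` or `X_m ∣ X^(a-b) · s` in `R` with `s ∉ P` would make a variable lying in `P`
divide `s`, since that variable does not occur in the monomial on the right.
-/

open MvPowerSeries

theorem IsLocalRing.isPrincipal_span_pair_iff {R : Type*} [CommRing R] [IsLocalRing R]
    {x y : R} : (Ideal.span {x, y}).IsPrincipal ↔ x ∣ y ∨ y ∣ x := by
  constructor
  · rintro ⟨h, hxy⟩
    have hh : h ∈ Ideal.span {x, y} := hxy ▸ Submodule.mem_span_singleton_self h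
    have hx : x ∈ Ideal.span {x, y} := Ideal.subset_span (by simp)
    have hy : y ∈ Ideal.span {x, y} := Ideal.subset_span (by simp)
    rw [hxy, Submodule.mem_span_singleton] at hx hy
    obtain ⟨t, rfl⟩ := hx
    obtain ⟨s, rfl⟩ := hy
    obtain ⟨α, β, hαβ⟩ := Ideal.mem_span_pair.mp hh
    simp only [smul_eq_mul] at hαβ ⊢
    by_cases ht : IsUnit t
    · exact .inl (ht.mul_left_dvd.mpr (dvd_mul_left h s))
    by_cases hs : IsUnit s
    · exact .inr (hs.mul_left_dvd.mpr (dvd_mul_left h t))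
    -- `h = (α t + β s) h` with `α t + β s` in the maximal ideal, so `h = 0`.
    have hmax : α * t + β * s ∈ IsLocalRing.maximalIdeal R :=
      add_mem (Ideal.mul_mem_left _ α ht) (Ideal.mul_mem_left _ β hs)
    have h0 : h = 0 := by
      refine (IsLocalRing.isUnit_one_sub_self_of_mem_nonunits _ hmax).mul_right_eq_zero.mp ?_
      linear_combination -hαβ
    simp [h0]
  · rintro (hdvd | hdvd)
    · rw [Ideal.span_insert, sup_eq_left.mpr (Ideal.span_singleton_le_span_singleton.mpr hdvd)]
      exact ⟨x, rfl⟩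
    · rw [Set.pair_comm, Ideal.span_insert,
        sup_eq_left.mpr (Ideal.span_singleton_le_span_singleton.mpr hdvd)]
      exact ⟨y, rfl⟩

theorem Ideal.IsPrime.prod_pow_mem_iff {R ι : Type*} [CommSemiring R] {P : Ideal R} (hP : P.IsPrime)
    {s : Finset ι} {x : ι → R} {c : ι → ℕ} :
    ∏ i ∈ s, x i ^ c i ∈ P ↔ ∃ i ∈ s, c i ≠ 0 ∧ x i ∈ P := by
  rw [hP.prod_mem_iff]
  refine exists_congr fun i => and_congr_right fun _ => ?_
  rcases eq_or_ne (c i) 0 with hc | hc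
  · simpa [hc] using P.ne_top_iff_one.mp hP.ne_top
  · simp [hc, hP.pow_mem_iff_mem _ (Nat.pos_of_ne_zero hc)]

theorem IsLocalization.exists_dvd_mul_of_algebraMap_dvd {R S : Type*} [CommRing R] [CommRing S]
    [Algebra R S] (M : Submonoid R) [IsLocalization M S] {x y : R}
    (h : algebraMap R S x ∣ algebraMap R S y) : ∃ s ∈ M, x ∣ s * y := by
  obtain ⟨q, hq⟩ := h
  obtain ⟨⟨r, t⟩, hrt⟩ := IsLocalization.surj M q
  obtain ⟨c, hc⟩ := IsLocalization.exists_of_eq (M := M) (S := S) (x := t * y) (y := x * r) <| by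
    rw [map_mul, map_mul, hq, ← hrt]; ring
  exact ⟨c * t, mul_mem c.2 t.2, ⟨c * r, by linear_combination hc⟩⟩

namespace MvPowerSeries

variable {σ R : Type*}

theorem prod_X_pow_eq_monomial [CommSemiring R] [Fintype σ] (c : σ → ℕ) :
    ∏ i, (X i : MvPowerSeries σ R) ^ c i = monomial (Finsupp.equivFunOnFinite.symm c) 1 := by
  simp_rw [X_pow_eq, prod_monomial, Finset.prod_const_one, Finsupp.equivFunOnFinite_symm_eq_sum]

theorem X_dvd_monomial_mul_iff [CommSemiring R] {j : σ} {e : σ →₀ ℕ} (he : e j = 0)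
    {p : MvPowerSeries σ R} : X j ∣ monomial e 1 * p ↔ X j ∣ p := by
  simp only [X_dvd_iff]
  refine ⟨fun h d hd => ?_, fun h d hd => ?_⟩
  · simpa [coeff_monomial_mul] using h (e + d) (by simp [he, hd])
  · rw [coeff_monomial_mul]
    split_ifs
    · rw [h _ (by simp [hd])]; simp
    · rfl

theorem monomial_one_dvd_monomial_one [CommSemiring R] {e f : σ →₀ ℕ} (h : e ≤ f) :
    (monomial e 1 : MvPowerSeries σ R) ∣ monomial f 1 :=
  ⟨monomial (f - e) 1, by rw [monomial_mul_monomial, one_mul, add_tsub_cancel_of_le h]⟩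

theorem not_algebraMap_monomial_dvd_monomial [CommRing R] {P : Ideal (MvPowerSeries σ R)}
    [P.IsPrime] {j : σ} {e f : σ →₀ ℕ} (hj : X j ∈ P) (hf : f j ≠ 0) (he : e j = 0) :
    ¬ algebraMap (MvPowerSeries σ R) (Localization.AtPrime P) (monomial f 1) ∣
      algebraMap (MvPowerSeries σ R) (Localization.AtPrime P) (monomial e 1) := by
  intro h
  obtain ⟨s, hs, hdvd⟩ := IsLocalization.exists_dvd_mul_of_algebraMap_dvd P.primeCompl h
  have hXj : X j ∣ monomial e 1 * s :=
    (X_def (R := R) j ▸ monomial_one_dvd_monomial_one (Finsupp.single_le_iff.mpr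
      (Nat.one_le_iff_ne_zero.mpr hf))).trans (mul_comm s _ ▸ hdvd)
  exact hs (P.mem_of_dvd ((X_dvd_monomial_mul_iff he).mp hXj) hj)

end MvPowerSeries

theorem stmt_9_general (k : Type*) [Field k] (n : ℕ) (m : Fin n)
    (a b : Fin n → ℕ) (hba : ∀ i, b i ≤ a i) (ham : a m = 0) (hbm : b m = 0)
    (P : Ideal (MvPowerSeries (Fin n) k)) (hP : P.IsPrime) :
    ¬ ((Ideal.span {∏ i, (MvPowerSeries.X i : MvPowerSeries (Fin n) k) ^ a i,
          (∏ i, (MvPowerSeries.X i : MvPowerSeries (Fin n) k) ^ b i) *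
            MvPowerSeries.X m}).map
        (algebraMap (MvPowerSeries (Fin n) k) (Localization.AtPrime P))).IsPrincipal ↔
      ((MvPowerSeries.X m : MvPowerSeries (Fin n) k) ∈ P ∧
        ∃ i, b i < a i ∧ (MvPowerSeries.X i : MvPowerSeries (Fin n) k) ∈ P) := by
  have : IsDomain (MvPowerSeries (Fin n) k) := NoZeroDivisors.to_isDomain _
  set φ := algebraMap (MvPowerSeries (Fin n) k) (Localization.AtPrime P)
  set w := ∏ i, (X i : MvPowerSeries (Fin n) k) ^ (a i - b i)
  have hu : ∏ i, (X i : MvPowerSeries (Fin n) k) ^ a i = (∏ i, X i ^ b i) * w := by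
    rw [← Finset.prod_mul_distrib]
    exact Finset.prod_congr rfl fun i _ => by rw [← pow_add, Nat.add_sub_cancel' (hba i)]
  have hB : φ (∏ i, X i ^ b i) ≠ 0 := by
    rw [prod_X_pow_eq_monomial, ne_eq,
      IsLocalization.to_map_eq_zero_iff _ P.primeCompl_le_nonZeroDivisors]
    intro h
    simpa using congrArg (coeff (Finsupp.equivFunOnFinite.symm b)) h
  have hwP : w ∈ P ↔ ∃ i, b i < a i ∧ X i ∈ P := by
    simp only [w, hP.prod_pow_mem_iff, Finset.mem_univ, true_and, Nat.sub_ne_zero_iff_lt]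
  rw [Ideal.map_span, Set.image_pair, hu, map_mul, map_mul, IsLocalRing.isPrincipal_span_pair_iff,
    mul_dvd_mul_iff_left hB, mul_dvd_mul_iff_left hB, ← hwP]
  by_cases hm : X m ∈ P
  swap
  · simp only [hm, false_and, iff_false, not_not]
    exact .inr ((IsLocalization.AtPrime.isUnit_to_map_iff _ P _).mpr hm).dvd
  by_cases hw : w ∈ P
  swap
  · simp only [hw, and_false, iff_false, not_not]
    exact .inl ((IsLocalization.AtPrime.isUnit_to_map_iff _ P _).mpr hw).dvd
  obtain ⟨i, hlt, hi⟩ := hwP.mp hw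
  have him : i ≠ m := by rintro rfl; omega
  simp only [hm, hw, and_self, iff_true, not_or]
  rw [X_def m, show w = _ from prod_X_pow_eq_monomial fun i => a i - b i]
  exact ⟨not_algebraMap_monomial_dvd_monomial hi (by simp; omega) (by simp [him]),
    not_algebraMap_monomial_dvd_monomial hm (by simp) (by simp [ham, hbm])⟩

/-- In `R = k[[X_0, …, X_{n-1}]]` over a field `k`, let `b ≤ a` componentwise with
`a m = b m = 0`, and set `u = X^a`, `v = X^b · X_m`. Then for every prime ideal `P`
of `R`, the extension of `(u, v)` to `R_P` fails to be principal if and only if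
`X_m ∈ P` and there exists `i` with `b i < a i` and `X i ∈ P`. -/
theorem stmt_9 (k : Type*) [Field k] (n : ℕ) (hn : 0 < n) (m : Fin n)
    (a b : Fin n → ℕ) (hba : ∀ i, b i ≤ a i) (ham : a m = 0) (hbm : b m = 0)
    (P : Ideal (MvPowerSeries (Fin n) k)) (hP : P.IsPrime) :
    ¬ ((Ideal.span {∏ i, (MvPowerSeries.X i : MvPowerSeries (Fin n) k) ^ a i,
          (∏ i, (MvPowerSeries.X i : MvPowerSeries (Fin n) k) ^ b i) *
            MvPowerSeries.X m}).map
        (algebraMap (MvPowerSeries (Fin n) k) (Localization.AtPrime P))).IsPrincipal ↔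
      ((MvPowerSeries.X m : MvPowerSeries (Fin n) k) ∈ P ∧
        ∃ i, b i < a i ∧ (MvPowerSeries.X i : MvPowerSeries (Fin n) k) ∈ P) :=
  stmt_9_general k n m a b hba ham hbm P hP
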